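/- The points (r,θ) = (r_e, π/2) and (r_e, 3π/2) are critical points of Chesnavich's potential U, i.e. both partial derivatives ∂U/∂r and ∂U/∂θ vanish there, and the value of U at both points equals U_e − D_e (so for Chesnavich's values these saddle points lie at (1.1, π/2) and (1.1, 3π/2) with energy exactly 8). -/

import Mathlib

/-- Chesnavich's long-range potential `U_CH`. -/
noncomputable def UCH (De re c1 c2 : ℝ) (r : ℝ) : ℝ :=
  De / (c1 - 6) *
    (2 * (3 - c2) * Real.exp (c1 * (1 - r / re))
      - (4 * c2 - c1 * c2 + c1) * (r / re) ^ (-6 : ℤ)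
      - (c1 - 6) * c2 * (r / re) ^ (-4 : ℤ))

/-- The rotor barrier `U_0`. -/
noncomputable def U0 (Ue a re : ℝ) (r : ℝ) : ℝ := Ue * Real.exp (-a * (r - re) ^ 2)

/-- Chesnavich's CH4+ potential `U(r,θ)`. -/
noncomputable def Upot (De re c1 c2 Ue a : ℝ) (r θ : ℝ) : ℝ :=
  UCH De re c1 c2 r + U0 Ue a re r / 2 * (1 - Real.cos (2 * θ))

lemma exp_deriv_aux (re c1 : ℝ) (hre : 0 < re) :
    HasDerivAt (fun r : ℝ => Real.exp (c1 * (1 - r / re))) (-(c1/re)) re := by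
  have h : HasDerivAt (fun r : ℝ => c1 * (1 - r / re)) (-(c1/re)) re := by
    have := (((hasDerivAt_id re).div_const re).const_sub 1).const_mul c1
    exact this.congr_deriv (by ring)
  have := h.exp
  convert this using 1
  rw [div_self hre.ne']
  simp

lemma zpow_deriv_aux (re : ℝ) (m : ℤ) (hre : 0 < re) :
    HasDerivAt (fun r : ℝ => (r / re) ^ m) (m / re) re := by
  have h1 : HasDerivAt (fun r : ℝ => r / re) (1/re) re := by
    simpa using (hasDerivAt_id re).div_const re
  have heq : (fun r : ℝ => (r / re) ^ m) = fun r : ℝ => r ^ m / re ^ m := by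
    funext r; rw [div_zpow]
  rw [heq]
  have h := (hasDerivAt_zpow m re (Or.inl hre.ne')).div_const (re ^ m)
  refine h.congr_deriv ?_
  rw [zpow_sub_one₀ hre.ne']
  field_simp

lemma UCH_deriv (De re c1 c2 : ℝ) (hre : 0 < re) (hc1 : 6 < c1) :
    HasDerivAt (fun r => UCH De re c1 c2 r) 0 re := by
  have hE := exp_deriv_aux re c1 hre
  have h6 := zpow_deriv_aux re (-6) hre
  have h4 := zpow_deriv_aux re (-4) hre
  have h := ((((hE.const_mul (2 * (3 - c2))).sub
      (h6.const_mul (4 * c2 - c1 * c2 + c1))).sub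
      (h4.const_mul ((c1 - 6) * c2))).const_mul (De / (c1 - 6)))
  refine h.congr_deriv ?_
  push_cast
  field_simp
  ring

lemma U0_deriv (Ue a re : ℝ) : HasDerivAt (fun r => U0 Ue a re r) 0 re := by
  have h : HasDerivAt (fun r : ℝ => -a * (r - re) ^ 2) 0 re := by
    have := (((hasDerivAt_id re).sub_const re).pow 2).const_mul (-a)
    simpa using this
  have := (h.exp).const_mul Ue
  simpa [U0, neg_mul] using this

lemma Upot_r_deriv (De re c1 c2 Ue a θ : ℝ) (hre : 0 < re) (hc1 : 6 < c1) :
    HasDerivAt (fun r => Upot De re c1 c2 Ue a r θ) 0 re := by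
  have h := (UCH_deriv De re c1 c2 hre hc1).add
    (((U0_deriv Ue a re).div_const 2).mul_const (1 - Real.cos (2 * θ)))
  exact h.congr_deriv (by simp)

lemma Upot_θ_deriv (De re c1 c2 Ue a θ : ℝ) (hs : Real.sin (2 * θ) = 0) :
    HasDerivAt (fun θ => Upot De re c1 c2 Ue a re θ) 0 θ := by
  have h2 : HasDerivAt (fun θ : ℝ => 2 * θ) 2 θ := by
    simpa using (hasDerivAt_id θ).const_mul 2
  have hc : HasDerivAt (fun θ : ℝ => 1 - Real.cos (2 * θ)) (2 * Real.sin (2 * θ)) θ := by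
    have := (h2.cos).const_sub 1
    exact this.congr_deriv (by ring)
  have h := ((hc.const_mul (U0 Ue a re re / 2)).const_add (UCH De re c1 c2 re))
  have : U0 Ue a re re / 2 * (2 * Real.sin (2 * θ)) = 0 := by rw [hs]; ring
  rw [this] at h
  exact h

lemma Upot_val (De re c1 c2 Ue a θ : ℝ) (hre : 0 < re) (hc1 : 6 < c1)
    (hc : Real.cos (2 * θ) = -1) :
    Upot De re c1 c2 Ue a re θ = Ue - De := by
  have h1 : re / re = 1 := div_self hre.ne'
  have h6 : c1 - 6 ≠ 0 := by linarith
  simp only [Upot, UCH, U0, hc, h1, sub_self, mul_zero, neg_zero, mul_one,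
    Real.exp_zero, one_zpow]
  norm_num
  field_simp
  ring

/-- The points `(r_e, π/2)` and `(r_e, 3π/2)` are critical points of Chesnavich's
potential `U` (both partial derivatives vanish) and the value of `U` there is `U_e - D_e`. -/
theorem Upot_saddles (De re c1 c2 Ue a : ℝ)
    (hDe : 0 < De) (hre : 0 < re) (hUe : 0 < Ue) (ha : 0 < a) (hc1 : 6 < c1) :
    Upot De re c1 c2 Ue a re (Real.pi / 2) = Ue - De ∧
    Upot De re c1 c2 Ue a re (3 * Real.pi / 2) = Ue - De ∧
    HasDerivAt (fun r => Upot De re c1 c2 Ue a r (Real.pi / 2)) 0 re ∧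
    HasDerivAt (fun θ => Upot De re c1 c2 Ue a re θ) 0 (Real.pi / 2) ∧
    HasDerivAt (fun r => Upot De re c1 c2 Ue a r (3 * Real.pi / 2)) 0 re ∧
    HasDerivAt (fun θ => Upot De re c1 c2 Ue a re θ) 0 (3 * Real.pi / 2) := by
  have hc1' : Real.cos (2 * (Real.pi / 2)) = -1 := by
    rw [show 2 * (Real.pi / 2) = Real.pi by ring, Real.cos_pi]
  have hc2' : Real.cos (2 * (3 * Real.pi / 2)) = -1 := by
    have : 2 * (3 * Real.pi / 2) = 2 * Real.pi + Real.pi := by ring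
    rw [this, Real.cos_add, Real.cos_two_pi, Real.sin_two_pi]
    simp
  have hs1 : Real.sin (2 * (Real.pi / 2)) = 0 := by
    rw [show 2 * (Real.pi / 2) = Real.pi by ring, Real.sin_pi]
  have hs2 : Real.sin (2 * (3 * Real.pi / 2)) = 0 := by
    have : 2 * (3 * Real.pi / 2) = 2 * Real.pi + Real.pi := by ring
    rw [this, Real.sin_add, Real.cos_two_pi, Real.sin_two_pi]
    simp
  exact ⟨Upot_val De re c1 c2 Ue a _ hre hc1 hc1',
    Upot_val De re c1 c2 Ue a _ hre hc1 hc2',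
    Upot_r_deriv De re c1 c2 Ue a _ hre hc1,
    Upot_θ_deriv De re c1 c2 Ue a _ hs1,
    Upot_r_deriv De re c1 c2 Ue a _ hre hc1,
    Upot_θ_deriv De re c1 c2 Ue a _ hs2⟩
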